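/- arXiv:math/0412396 — 2 statements merged into one kernel-verified Lean document; each statement's English description precedes it below -/
import Mathlib

section
/- The only equilibrium states with ‖IΩ‖ = m ≠ 0 of the free rigid body with delay Ṁ = M×Ω + α M×(M̃×Ω̃) (where at equilibrium M̃ = M, Ω̃ = Ω) lying on a coordinate axis are Ω₁ = (m/I₁,0,0), Ω₂ = (0,m/I₂,0), Ω₃ = (0,0,m/I₃); more precisely, if I₁, I₂, I₃ are pairwise distinct and α ≠ 0, then a constant solution Ω satisfies (IΩ)×Ω + α (IΩ)×((IΩ)×Ω) = 0 if and only if Ω is a scalar multiple of a standard basis vector. -/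
/-!
With `v = M ⨯₃ Ω`, the equation reads `v + α • M ⨯₃ v = 0`. Dotting with `v` kills the
second term, as `M ⨯₃ v ⟂ v`, so `v ⬝ᵥ v = 0` and `v = 0`: the equilibria are exactly the
`Ω` with `(IΩ) ⨯₃ Ω = 0`. The components of `(IΩ) ⨯₃ Ω` are `(I_j - I_k) Ω_j Ω_k`, so for
distinct `I_i` this says that at most one coordinate of `Ω` is nonzero.
-/

open Matrix

theorem add_smul_cross_eq_zero_iff {R : Type*} [CommRing R] [LinearOrder R]
    [IsStrictOrderedRing R] (a : R) (u v : Fin 3 → R) : v + a • u ⨯₃ v = 0 ↔ v = 0 := by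
  refine ⟨fun h => ?_, fun h => by simp [h]⟩
  have hdot : v ⬝ᵥ v = 0 := by
    simpa [dotProduct_add, dotProduct_smul, dot_cross_self] using congrArg (v ⬝ᵥ ·) h
  exact dotProduct_self_eq_zero.mp hdot

theorem exists_eq_smul_single_iff {ι R : Type*} [DecidableEq ι] [Nonempty ι]
    [MulZeroOneClass R] [NoZeroDivisors R] (v : ι → R) :
    (∃ (i : ι) (c : R), v = c • (Pi.single i 1 : ι → R)) ↔
      ∀ i j, i ≠ j → v i * v j = 0 := by
  constructor
  · rintro ⟨k, c, rfl⟩ i j hij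
    rcases eq_or_ne i k with rfl | hik
    · simp [Ne.symm hij]
    · simp [hik]
  · intro h
    by_cases hv : v = 0
    · exact ⟨Classical.arbitrary ι, 0, by simp [hv]⟩
    obtain ⟨i, hi⟩ := Function.ne_iff.mp hv
    refine ⟨i, v i, funext fun j => ?_⟩
    rcases eq_or_ne j i with rfl | hji
    · simp
    · have hj : v j = 0 := (mul_eq_zero.mp (h i j hji.symm)).resolve_left hi
      simp [hj, hji]

theorem diag_mul_cross_self {R : Type*} [CommRing R] (d v : Fin 3 → R) :
    (fun i => d i * v i) ⨯₃ v =
      ![(d 1 - d 2) * (v 1 * v 2), (d 2 - d 0) * (v 2 * v 0), (d 0 - d 1) * (v 0 * v 1)] := by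
  rw [cross_apply]
  ext i
  fin_cases i <;> simp <;> ring

theorem diag_mul_cross_self_eq_zero_iff {R : Type*} [CommRing R] [IsDomain R]
    {d : Fin 3 → R} (hd : Function.Injective d) (v : Fin 3 → R) :
    (fun i => d i * v i) ⨯₃ v = 0 ↔ ∃ (i : Fin 3) (c : R), v = c • (Pi.single i 1 : Fin 3 → R) := by
  have h01 : d 0 - d 1 ≠ 0 := sub_ne_zero.mpr (hd.ne (by decide))
  have h12 : d 1 - d 2 ≠ 0 := sub_ne_zero.mpr (hd.ne (by decide))
  have h20 : d 2 - d 0 ≠ 0 := sub_ne_zero.mpr (hd.ne (by decide))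
  rw [exists_eq_smul_single_iff, diag_mul_cross_self]
  simp [h01, h12, h20, Fin.forall_fin_succ]
  tauto

theorem stmt_5_general (I₁ I₂ I₃ α : ℝ)
    (h12 : I₁ ≠ I₂) (h13 : I₁ ≠ I₃) (h23 : I₂ ≠ I₃)
    (Ω : Fin 3 → ℝ) (M : Fin 3 → ℝ)
    (hM : M = fun i => ![I₁, I₂, I₃] i * Ω i) :
    (M ⨯₃ Ω + α • (M ⨯₃ (M ⨯₃ Ω)) = 0) ↔
      ∃ (i : Fin 3) (c : ℝ), Ω = c • (Pi.single i 1 : Fin 3 → ℝ) := by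
  have hI : Function.Injective ![I₁, I₂, I₃] := by
    simp [Function.Injective, Fin.forall_fin_succ, h12, h13, h23, h12.symm, h13.symm, h23.symm]
  rw [add_smul_cross_eq_zero_iff, hM, diag_mul_cross_self_eq_zero_iff hI]

/-- For the free rigid body with delay, with pairwise distinct moments of
inertia and `α ≠ 0`, a constant state `Ω` is an equilibrium, i.e.
`(IΩ)×Ω + α (IΩ)×((IΩ)×Ω) = 0`, iff `Ω` is a multiple of a standard basis
vector. -/
theorem stmt_5 (I₁ I₂ I₃ α : ℝ) (h1 : 0 < I₁) (h2 : 0 < I₂) (h3 : 0 < I₃)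
    (h12 : I₁ ≠ I₂) (h13 : I₁ ≠ I₃) (h23 : I₂ ≠ I₃) (hα : α ≠ 0)
    (Ω : Fin 3 → ℝ) (M : Fin 3 → ℝ)
    (hM : M = fun i => ![I₁, I₂, I₃] i * Ω i) :
    (M ⨯₃ Ω + α • (M ⨯₃ (M ⨯₃ Ω)) = 0) ↔
      ∃ (i : Fin 3) (c : ℝ), Ω = c • (Pi.single i 1 : Fin 3 → ℝ) :=
  stmt_5_general I₁ I₂ I₃ α h12 h13 h23 Ω M hM
end

section
/- For a second-order Lagrangian vector field Z (with energy E conserved along Z) and a vertical vector field with delay Y, the derivative of the energy along the perturbed dynamics equals the power of the induced force: dE(v)·Y(v,ṽ) = ⟨F^Y(v,ṽ), v⟩, where F^Y is defined by ⟨F^Y(v,ṽ), Tπ(V_v)⟩ = −Ω_L(v)(Y(v,ṽ), V_v). Consequently Y is dissipative with delay (dE·Y ≤ 0) iff ⟨F^Y(v,ṽ), v⟩ ≤ 0 for all (v,ṽ). -/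
/-- Linear model of a dissipative Lagrangian system with delay on
`TQ = ℝⁿ × ℝⁿ`.  For a second-order Lagrangian vector field `Z`
(`i_Z Ω_L = dE`) and a vertical vector field with delay `Y`, the induced
force field `F^Y` satisfies `dE(v)·Y(v,ṽ) = ⟨F^Y(v,ṽ), v⟩`; consequently
`Y` is dissipative with delay iff `⟨F^Y(v,ṽ), v⟩ ≤ 0` everywhere. -/
theorem stmt_12 (n : ℕ)
    (Ω : ((Fin n → ℝ) × (Fin n → ℝ)) →
      ((Fin n → ℝ) × (Fin n → ℝ)) →ₗ[ℝ] ((Fin n → ℝ) × (Fin n → ℝ)) →ₗ[ℝ] ℝ)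
    (hskew : ∀ v W₁ W₂, Ω v W₁ W₂ = -Ω v W₂ W₁)
    (E : ((Fin n → ℝ) × (Fin n → ℝ)) → ℝ)
    (dE : ((Fin n → ℝ) × (Fin n → ℝ)) →
      ((Fin n → ℝ) × (Fin n → ℝ)) →L[ℝ] ℝ)
    (hE : ∀ v, HasFDerivAt E (dE v) v)
    (Z : ((Fin n → ℝ) × (Fin n → ℝ)) → ((Fin n → ℝ) × (Fin n → ℝ)))
    (hZ : ∀ v W, Ω v (Z v) W = dE v W)
    (hsecond : ∀ v, (Z v).1 = v.2)
    (Y : ((Fin n → ℝ) × (Fin n → ℝ)) × ((Fin n → ℝ) × (Fin n → ℝ)) →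
      ((Fin n → ℝ) × (Fin n → ℝ)))
    (hvert : ∀ p, (Y p).1 = 0)
    (F : ((Fin n → ℝ) × (Fin n → ℝ)) × ((Fin n → ℝ) × (Fin n → ℝ)) →
      (Fin n → ℝ) →ₗ[ℝ] ℝ)
    (hF : ∀ p W, F p W.1 = -Ω p.1 (Y p) W) :
    (∀ p, dE p.1 (Y p) = F p p.1.2) ∧
    ((∀ p, dE p.1 (Y p) ≤ 0) ↔ (∀ p, F p p.1.2 ≤ 0)) := by
  have key : ∀ p, dE p.1 (Y p) = F p p.1.2 := by
    intro p
    have h1 := hF p (Z p.1)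
    rw [hsecond] at h1
    rw [h1, ← hskew, hZ]
  exact ⟨key, ⟨fun h p => key p ▸ h p, fun h p => (key p).symm ▸ h p⟩⟩
end
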